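/- Let g : [0,∞) → [0,∞) with g(0) = 0 be such that x ↦ Prox_g(x) admits a monotone selection, and let B ∈ ℝ^{m×n} (m ≤ n) with SVD B = U Diag(σ(B)) Vᵀ. Then X* = U Diag(ϱ*) Vᵀ, where ϱᵢ* ∈ Prox_g(σᵢ(B)) is chosen nonincreasing, is a global minimizer of X ↦ ∑_{i=1}^m g(σᵢ(X)) + (1/2)‖X - B‖_F². -/

import Mathlib

open Set Matrix

noncomputable def svUnsorted {m n : ℕ} (A : Matrix (Fin m) (Fin n) ℝ) : Fin m → ℝ :=
  fun i => Real.sqrt ((Matrix.isHermitian_mul_conjTranspose_self A).eigenvalues i)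

/-- `singularValues A i` is the `i`-th largest singular value of `A`. -/
noncomputable def singularValues {m n : ℕ} (A : Matrix (Fin m) (Fin n) ℝ) : Fin m → ℝ :=
  fun i => svUnsorted A (Tuple.sort (fun j => - svUnsorted A j) i)

/-- The `m × n` rectangular diagonal matrix with diagonal entries `d`. -/
def rectDiag {m n : ℕ} (d : Fin m → ℝ) : Matrix (Fin m) (Fin n) ℝ :=
  Matrix.of fun i j => if (i : ℕ) = (j : ℕ) then d i else 0

/-- The squared Frobenius norm. -/
def frobSq {m n : ℕ} (X : Matrix (Fin m) (Fin n) ℝ) : ℝ :=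
  ∑ i, ∑ j, (X i j)^2

/-!
Von Neumann's trace inequality `tr (X Bᵀ) ≤ ∑ σᵢ(X) σᵢ(B)` turns `‖X - B‖²_F = ‖X‖²_F - 2 tr (X Bᵀ)
+ ‖B‖²_F` into `‖X - B‖²_F ≥ ∑ (σᵢ(X) - σᵢ(B))²`. Hence the objective at `X` is at least
`∑ [g(σᵢ(X)) + ½ (σᵢ(X) - σᵢ(B))²]`, which dominates `∑ [g(ϱᵢ) + ½ (ϱᵢ - σᵢ(B))²]` term by term
because `ϱᵢ` minimises the `i`-th summand over `[0, ∞)`; and that is exactly the objective at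
`U Diag(ϱ) Vᵀ`, whose singular values are `ϱ` since `ϱ` is nonincreasing.

For von Neumann's inequality write `UᵀXV = P Diag(σ(X)) R` with `P` orthogonal and `R` a partial
isometry. Then `tr (X Bᵀ) = ∑ₖₗ σₖ(X) σₗ(B) Pₗₖ Rₖₗ`, the matrix `(|Pₗₖ Rₖₗ|)` is doubly
substochastic by AM-GM, and for such matrices Abel summation reduces the bound to a bathtub
inequality.
-/

theorem sum_mul_nonneg_of_antitone_of_sum_Iic_nonneg {m : ℕ} {a e : Fin m → ℝ}
    (ha : Antitone a) (ha0 : ∀ i, 0 ≤ a i) (he : ∀ k, 0 ≤ ∑ i ∈ Finset.Iic k, e i) :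
    0 ≤ ∑ i, a i * e i := by
  induction m with
  | zero => simp
  | succ m ih =>
    have htotal : 0 ≤ ∑ i, e i := by
      simpa [← Fin.top_eq_last, Finset.Iic_top] using he (Fin.last m)
    have hinit : 0 ≤ ∑ i : Fin m, (a i.castSucc - a (Fin.last m)) * e i.castSucc := by
      refine ih (fun i j hij => sub_le_sub_right (ha (Fin.castSucc_le_castSucc_iff.2 hij)) _)
        (fun i => sub_nonneg.2 (ha (Fin.le_last _))) (fun k => ?_)
      simpa [← Fin.map_castSuccEmb_Iic] using he k.castSucc
    have hsplit : ∑ i, a i * e i = a (Fin.last m) * ∑ i, e i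
        + ∑ i : Fin m, (a i.castSucc - a (Fin.last m)) * e i.castSucc := by
      simp only [Fin.sum_univ_castSucc, sub_mul, Finset.sum_sub_distrib, ← Finset.mul_sum]
      ring
    rw [hsplit]
    exact add_nonneg (mul_nonneg (ha0 _) htotal) hinit

theorem sum_mul_le_sum_Iic_of_antitone {ι : Type*} [Fintype ι] [LinearOrder ι]
    [LocallyFiniteOrderBot ι] {b w : ι → ℝ} (hb : Antitone b) (hb0 : ∀ i, 0 ≤ b i)
    (hw0 : ∀ i, 0 ≤ w i) (hw1 : ∀ i, w i ≤ 1) (k : ι) (hw : ∑ i, w i ≤ (Finset.Iic k).card) :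
    ∑ i, b i * w i ≤ ∑ i ∈ Finset.Iic k, b i := by
  have hterm : ∀ i, (b i - b k) * (w i - if i ≤ k then 1 else 0) ≤ 0 := by
    intro i
    split_ifs with hik
    · exact mul_nonpos_of_nonneg_of_nonpos (sub_nonneg.2 (hb hik)) (by linarith [hw1 i])
    · exact mul_nonpos_of_nonpos_of_nonneg (sub_nonpos.2 (hb (le_of_not_ge hik)))
        (by linarith [hw0 i])
  have hIic : ∑ i ∈ Finset.Iic k, b i = ∑ i, b i * if i ≤ k then 1 else 0 := by
    simp [← Finset.filter_ge_eq_Iic, Finset.sum_filter]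
  have hcard : ((Finset.Iic k).card : ℝ) = ∑ i, if i ≤ k then 1 else 0 := by
    simp [← Finset.filter_ge_eq_Iic, Finset.sum_boole]
  have hdecomp : ∑ i, b i * w i - ∑ i ∈ Finset.Iic k, b i =
      ∑ i, (b i - b k) * (w i - if i ≤ k then 1 else 0) +
        b k * (∑ i, w i - (Finset.Iic k).card) := by
    rw [hIic, hcard, ← Finset.sum_sub_distrib, ← Finset.sum_sub_distrib, Finset.mul_sum,
      ← Finset.sum_add_distrib]
    exact Finset.sum_congr rfl fun i _ => by ring
  have hsum := Finset.sum_nonpos fun i (_ : i ∈ Finset.univ) => hterm i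
  have hlast := mul_nonpos_of_nonneg_of_nonpos (hb0 k) (sub_nonpos.2 hw)
  linarith

theorem sum_mul_mul_le_of_doublySubstochastic {m : ℕ} {a b : Fin m → ℝ}
    {M : Fin m → Fin m → ℝ} (ha : Antitone a) (ha0 : ∀ i, 0 ≤ a i) (hb : Antitone b)
    (hb0 : ∀ i, 0 ≤ b i) (hM0 : ∀ i l, 0 ≤ M i l) (hrow : ∀ i, ∑ l, M i l ≤ 1)
    (hcol : ∀ l, ∑ i, M i l ≤ 1) :
    ∑ i, ∑ l, a i * b l * M i l ≤ ∑ i, a i * b i := by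
  have hprefix : ∀ k, 0 ≤ ∑ i ∈ Finset.Iic k, (b i - ∑ l, b l * M i l) := by
    intro k
    have hswap : ∑ i ∈ Finset.Iic k, ∑ l, b l * M i l = ∑ l, b l * ∑ i ∈ Finset.Iic k, M i l := by
      rw [Finset.sum_comm]
      simp only [Finset.mul_sum]
    have hbathtub := sum_mul_le_sum_Iic_of_antitone hb hb0
      (fun l => Finset.sum_nonneg fun i _ => hM0 i l)
      (fun l => (Finset.sum_le_univ_sum_of_nonneg fun i => hM0 i l).trans (hcol l)) k
      (by
        rw [Finset.sum_comm]
        simpa using Finset.sum_le_sum fun i (_ : i ∈ Finset.Iic k) => hrow i)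
    rw [Finset.sum_sub_distrib, hswap]
    linarith
  have := sum_mul_nonneg_of_antitone_of_sum_Iic_nonneg ha ha0 hprefix
  simp only [mul_sub, Finset.sum_sub_distrib, Finset.mul_sum] at this
  simp only [mul_assoc]
  linarith

theorem sum_abs_mul_abs_le_one {ι : Type*} [Fintype ι] {u v : ι → ℝ}
    (hu : ∑ i, u i ^ 2 ≤ 1) (hv : ∑ i, v i ^ 2 ≤ 1) : ∑ i, |u i| * |v i| ≤ 1 := by
  have hamgm : ∀ i, |u i| * |v i| ≤ (u i ^ 2 + v i ^ 2) / 2 := fun i => by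
    nlinarith [two_mul_le_add_sq |u i| |v i|, sq_abs (u i), sq_abs (v i)]
  calc ∑ i, |u i| * |v i| ≤ ∑ i, (u i ^ 2 + v i ^ 2) / 2 := Finset.sum_le_sum fun i _ => hamgm i
    _ = (∑ i, u i ^ 2 + ∑ i, v i ^ 2) / 2 := by rw [← Finset.sum_div, Finset.sum_add_distrib]
    _ ≤ 1 := by linarith

section PartialIsometry

variable {ι κ : Type*} [Fintype ι] [Fintype κ]

def IsPartialIsometry (R : Matrix ι κ ℝ) : Prop := R * Rᵀ * R = R

theorem isPartialIsometry_of_transpose_mul_self [DecidableEq κ] {P : Matrix ι κ ℝ}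
    (hP : Pᵀ * P = 1) : IsPartialIsometry P := by
  rw [IsPartialIsometry, Matrix.mul_assoc, hP, Matrix.mul_one]

theorem IsPartialIsometry.transpose {R : Matrix ι κ ℝ} (h : IsPartialIsometry R) :
    IsPartialIsometry Rᵀ := by
  have := congrArg Matrix.transpose h
  rwa [transpose_mul, transpose_mul, ← Matrix.mul_assoc] at this

theorem apply_self_le_one_of_transpose_eq_of_mul_self_eq {A : Matrix ι ι ℝ} (hsymm : Aᵀ = A)
    (hidem : A * A = A) (i : ι) : A i i ≤ 1 := by
  have hdiag : A i i = ∑ j, A i j ^ 2 := by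
    conv_lhs => rw [← hidem, Matrix.mul_apply]
    refine Finset.sum_congr rfl fun j _ => ?_
    rw [sq, ← transpose_apply A j i, hsymm]
  have : A i i ^ 2 ≤ A i i :=
    hdiag ▸ Finset.single_le_sum (f := fun j => A i j ^ 2) (fun j _ => sq_nonneg _)
      (Finset.mem_univ i)
  nlinarith

theorem IsPartialIsometry.sum_sq_col_le_one {R : Matrix ι κ ℝ} (h : IsPartialIsometry R)
    (j : κ) : ∑ i, R i j ^ 2 ≤ 1 := by
  have hidem : Rᵀ * R * (Rᵀ * R) = Rᵀ * R := by
    rw [← Matrix.mul_assoc, Matrix.mul_assoc Rᵀ R Rᵀ, Matrix.mul_assoc Rᵀ, h]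
  simpa [Matrix.mul_apply, sq] using
    apply_self_le_one_of_transpose_eq_of_mul_self_eq (by simp [transpose_mul]) hidem j

theorem IsPartialIsometry.sum_sq_row_le_one {R : Matrix ι κ ℝ} (h : IsPartialIsometry R)
    (i : ι) : ∑ j, R i j ^ 2 ≤ 1 :=
  h.transpose.sum_sq_col_le_one i

end PartialIsometry

section RectDiag

variable {m n : ℕ}

theorem rectDiag_apply_castLE (hmn : m ≤ n) (d : Fin m → ℝ) (i : Fin m) (j : Fin n) :
    (rectDiag d : Matrix (Fin m) (Fin n) ℝ) i j = if j = Fin.castLE hmn i then d i else 0 := by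
  simp [rectDiag, Fin.ext_iff, eq_comm]

theorem rectDiag_mul_transpose (hmn : m ≤ n) (d : Fin m → ℝ) :
    (rectDiag d : Matrix (Fin m) (Fin n) ℝ) * (rectDiag d : Matrix (Fin m) (Fin n) ℝ)ᵀ =
      diagonal (fun i => d i ^ 2) := by
  ext i j
  simp only [Matrix.mul_apply, transpose_apply, rectDiag_apply_castLE hmn, diagonal_apply]
  by_cases hij : i = j
  · subst hij
    simp [sq]
  · simp [hij, Ne.symm hij]

theorem trace_mul_transpose_rectDiag (hmn : m ≤ n) (Y : Matrix (Fin m) (Fin n) ℝ)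
    (b : Fin m → ℝ) :
    trace (Y * (rectDiag b : Matrix (Fin m) (Fin n) ℝ)ᵀ) = ∑ i, b i * Y i (Fin.castLE hmn i) := by
  simp [trace, Matrix.mul_apply, rectDiag_apply_castLE hmn, mul_comm]

theorem frobSq_rectDiag (hmn : m ≤ n) (d : Fin m → ℝ) :
    frobSq (rectDiag d : Matrix (Fin m) (Fin n) ℝ) = ∑ i, d i ^ 2 := by
  simp [frobSq, rectDiag_apply_castLE hmn]

end RectDiag

section SingularValues

variable {m n : ℕ}

theorem singularValues_nonneg (A : Matrix (Fin m) (Fin n) ℝ) (i : Fin m) :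
    0 ≤ singularValues A i :=
  Real.sqrt_nonneg _

theorem singularValues_antitone (A : Matrix (Fin m) (Fin n) ℝ) :
    Antitone (singularValues A) := fun _ _ hij => by
  simpa [singularValues] using Tuple.monotone_sort (fun j => - svUnsorted A j) hij

theorem sq_svUnsorted (A : Matrix (Fin m) (Fin n) ℝ) (i : Fin m) :
    svUnsorted A i ^ 2 = (isHermitian_mul_conjTranspose_self A).eigenvalues i :=
  Real.sq_sqrt ((posSemidef_self_mul_conjTranspose A).eigenvalues_nonneg i)

theorem map_sq_singularValues (A : Matrix (Fin m) (Fin n) ℝ) :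
    Finset.univ.val.map (fun i => singularValues A i ^ 2) =
      Finset.univ.val.map (isHermitian_mul_conjTranspose_self A).eigenvalues := by
  simp only [singularValues, sq_svUnsorted]
  rw [← Function.comp_def (isHermitian_mul_conjTranspose_self A).eigenvalues, ← Multiset.map_map,
    Multiset.map_univ_val_equiv]

theorem roots_charpoly_mul_transpose (A : Matrix (Fin m) (Fin n) ℝ) :
    (A * Aᵀ).charpoly.roots = Finset.univ.val.map (fun i => singularValues A i ^ 2) := by
  rw [map_sq_singularValues, ← conjTranspose_eq_transpose_of_trivial,
    (isHermitian_mul_conjTranspose_self A).roots_charpoly_eq_eigenvalues]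
  rfl

theorem singularValues_eq_of_roots_charpoly {A : Matrix (Fin m) (Fin n) ℝ} {d : Fin m → ℝ}
    (hd : Antitone d) (hd0 : ∀ i, 0 ≤ d i)
    (h : (A * Aᵀ).charpoly.roots = Finset.univ.val.map (fun i => d i ^ 2)) :
    singularValues A = d := by
  have hmap : Finset.univ.val.map (singularValues A) = Finset.univ.val.map d := by
    have := congrArg (Multiset.map Real.sqrt) ((roots_charpoly_mul_transpose A).symm.trans h)
    simpa [Multiset.map_map, Function.comp_def, Real.sqrt_sq, hd0, singularValues_nonneg]
      using this
  rw [Fin.univ_val_map, Fin.univ_val_map, Multiset.coe_eq_coe] at hmap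
  exact List.ofFn_injective
    (hmap.eq_of_sortedGE (singularValues_antitone A).sortedGE_ofFn hd.sortedGE_ofFn)

theorem singularValues_mul_mul_of_orthogonal (A : Matrix (Fin m) (Fin n) ℝ)
    {U : Matrix (Fin m) (Fin m) ℝ} {V : Matrix (Fin n) (Fin n) ℝ}
    (hU : Uᵀ * U = 1) (hV : V * Vᵀ = 1) :
    singularValues (U * A * V) = singularValues A := by
  refine singularValues_eq_of_roots_charpoly (singularValues_antitone A)
    (singularValues_nonneg A) ?_
  have hconj : U * A * V * (U * A * V)ᵀ = U * (A * Aᵀ * Uᵀ) := by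
    simp only [transpose_mul, Matrix.mul_assoc, ← Matrix.mul_assoc V, hV, Matrix.one_mul]
  rw [hconj, charpoly_mul_comm, Matrix.mul_assoc, hU, Matrix.mul_one,
    roots_charpoly_mul_transpose]

theorem singularValues_rectDiag (hmn : m ≤ n) {d : Fin m → ℝ} (hd : Antitone d)
    (hd0 : ∀ i, 0 ≤ d i) : singularValues (rectDiag d : Matrix (Fin m) (Fin n) ℝ) = d := by
  refine singularValues_eq_of_roots_charpoly hd hd0 ?_
  rw [rectDiag_mul_transpose hmn, charpoly_diagonal, Polynomial.roots_prod]
  · simp only [Polynomial.roots_X_sub_C]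
    exact Multiset.bind_singleton _ _
  · exact Finset.prod_ne_zero_iff.2 fun i _ => Polynomial.X_sub_C_ne_zero _

theorem exists_orthogonal_mul_transpose_eq (A : Matrix (Fin m) (Fin n) ℝ) :
    ∃ P : Matrix (Fin m) (Fin m) ℝ, Pᵀ * P = 1 ∧
      A * Aᵀ = P * diagonal (fun k => singularValues A k ^ 2) * Pᵀ := by
  have hH := isHermitian_mul_conjTranspose_self A
  set P₀ : Matrix (Fin m) (Fin m) ℝ := (hH.eigenvectorUnitary : Matrix (Fin m) (Fin m) ℝ)
  have hP₀ : P₀ᵀ * P₀ = 1 := by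
    have h := mem_unitaryGroup_iff'.mp hH.eigenvectorUnitary.2
    rwa [star_eq_conjTranspose, conjTranspose_eq_transpose_of_trivial] at h
  have hspec : A * Aᵀ = P₀ * diagonal hH.eigenvalues * P₀ᵀ := by
    have h := hH.spectral_theorem
    rw [Unitary.conjStarAlgAut_apply] at h
    rwa [← conjTranspose_eq_transpose_of_trivial, ← conjTranspose_eq_transpose_of_trivial P₀,
      ← star_eq_conjTranspose]
  set π := Tuple.sort (fun j => - svUnsorted A j)
  refine ⟨P₀.submatrix id π, ?_, ?_⟩
  · rw [transpose_submatrix, ← submatrix_mul _ _ _ id _ Function.bijective_id, hP₀,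
      submatrix_one_equiv]
  · have hdiag : diagonal (fun k => singularValues A k ^ 2) =
        (diagonal hH.eigenvalues).submatrix π π := by
      rw [submatrix_diagonal_equiv]
      exact congrArg diagonal (funext fun k => sq_svUnsorted A (π k))
    rw [hdiag, transpose_submatrix, submatrix_mul_equiv, submatrix_mul_equiv, submatrix_id_id,
      hspec]

theorem exists_thin_svd (A : Matrix (Fin m) (Fin n) ℝ) :
    ∃ (P : Matrix (Fin m) (Fin m) ℝ) (R : Matrix (Fin m) (Fin n) ℝ), Pᵀ * P = 1 ∧
      IsPartialIsometry R ∧ A = P * diagonal (singularValues A) * R := by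
  obtain ⟨P, hP, hAA⟩ := exists_orthogonal_mul_transpose_eq A
  set a := singularValues A
  set Z := Pᵀ * A
  have hZZ : Z * Zᵀ = diagonal (fun k => a k ^ 2) := by
    simp only [Z, transpose_mul, transpose_transpose, Matrix.mul_assoc]
    rw [← Matrix.mul_assoc A, hAA]
    simp only [Matrix.mul_assoc, hP, Matrix.mul_one, ← Matrix.mul_assoc Pᵀ P, Matrix.one_mul]
  have hZ0 : ∀ k j, a k = 0 → Z k j = 0 := by
    intro k j hk
    have hrow : ∑ j, Z k j ^ 2 = 0 := by
      simpa [Matrix.mul_apply, sq, hk] using congrFun (congrFun hZZ k) k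
    exact pow_eq_zero_iff two_ne_zero |>.mp
      ((Finset.sum_eq_zero_iff_of_nonneg fun j _ => sq_nonneg _).mp hrow j (Finset.mem_univ j))
  -- `0⁻¹ = 0` is harmless here: the rows of `Z` with `aₖ = 0` vanish (`hZ0`).
  refine ⟨P, diagonal a⁻¹ * Z, hP, ?_, ?_⟩
  · have hinv : ∀ x : ℝ, x⁻¹ * x ^ 2 * x⁻¹ * x⁻¹ = x⁻¹ := fun x => by
      rcases eq_or_ne x 0 with rfl | hx
      · simp
      · field_simp
    rw [IsPartialIsometry, transpose_mul, diagonal_transpose,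
      show ∀ D : Matrix (Fin m) (Fin m) ℝ, D * Z * (Zᵀ * D) * (D * Z) = D * (Z * Zᵀ) * D * D * Z
        from fun D => by simp only [Matrix.mul_assoc],
      hZZ, diagonal_mul_diagonal, diagonal_mul_diagonal, diagonal_mul_diagonal]
    simp only [Pi.inv_apply, hinv]
    rfl
  · have hcancel : diagonal a * (diagonal a⁻¹ * Z) = Z := by
      ext k j
      rcases eq_or_ne (a k) 0 with hk | hk
      · simp [hk, hZ0 k j hk]
      · simp [hk]
    rw [Matrix.mul_assoc, hcancel, ← Matrix.mul_assoc, mul_eq_one_comm.mp hP, Matrix.one_mul]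

end SingularValues

section Frobenius

variable {m n : ℕ}

theorem frobSq_eq_trace (X : Matrix (Fin m) (Fin n) ℝ) : frobSq X = trace (X * Xᵀ) := by
  simp [frobSq, trace, Matrix.mul_apply, sq]

theorem frobSq_eq_sum_sq_singularValues (X : Matrix (Fin m) (Fin n) ℝ) :
    frobSq X = ∑ i, singularValues X i ^ 2 := by
  rw [frobSq_eq_trace, ← conjTranspose_eq_transpose_of_trivial,
    (isHermitian_mul_conjTranspose_self X).trace_eq_sum_eigenvalues]
  exact (congrArg Multiset.sum (map_sq_singularValues X)).symm

theorem frobSq_mul_mul_of_orthogonal (A : Matrix (Fin m) (Fin n) ℝ)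
    {U : Matrix (Fin m) (Fin m) ℝ} {V : Matrix (Fin n) (Fin n) ℝ}
    (hU : Uᵀ * U = 1) (hV : V * Vᵀ = 1) : frobSq (U * A * V) = frobSq A := by
  simp only [frobSq_eq_sum_sq_singularValues, singularValues_mul_mul_of_orthogonal A hU hV]

theorem frobSq_sub (X B : Matrix (Fin m) (Fin n) ℝ) :
    frobSq (X - B) = frobSq X - 2 * trace (X * Bᵀ) + frobSq B := by
  have hsymm : trace (B * Xᵀ) = trace (X * Bᵀ) := by
    rw [← trace_transpose, transpose_mul, transpose_transpose]
  simp only [frobSq_eq_trace, transpose_sub, Matrix.mul_sub, Matrix.sub_mul, trace_sub, hsymm]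
  ring

theorem frobSq_svd_sub_svd (hmn : m ≤ n) {U : Matrix (Fin m) (Fin m) ℝ}
    {V : Matrix (Fin n) (Fin n) ℝ} (hU : Uᵀ * U = 1) (hV : Vᵀ * V = 1) (d e : Fin m → ℝ) :
    frobSq (U * (rectDiag d : Matrix (Fin m) (Fin n) ℝ) * Vᵀ -
      U * (rectDiag e : Matrix (Fin m) (Fin n) ℝ) * Vᵀ) = ∑ i, (d i - e i) ^ 2 := by
  have hde : (rectDiag d : Matrix (Fin m) (Fin n) ℝ) - rectDiag e = rectDiag (d - e) := by
    ext i j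
    simp only [rectDiag, Matrix.sub_apply, of_apply, Pi.sub_apply]
    split_ifs <;> simp
  rw [← Matrix.sub_mul, ← Matrix.mul_sub, hde,
    frobSq_mul_mul_of_orthogonal _ hU (by rwa [transpose_transpose]), frobSq_rectDiag hmn]
  rfl

end Frobenius

section VonNeumann

variable {m n : ℕ}

theorem sum_mul_apply_castLE_le_sum_singularValues_mul (hmn : m ≤ n)
    (Y : Matrix (Fin m) (Fin n) ℝ) {b : Fin m → ℝ} (hb : Antitone b) (hb0 : ∀ i, 0 ≤ b i) :
    ∑ l, b l * Y l (Fin.castLE hmn l) ≤ ∑ k, singularValues Y k * b k := by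
  obtain ⟨P, R, hP, hR, hY⟩ := exists_thin_svd Y
  set a := singularValues Y
  set M : Fin m → Fin m → ℝ := fun k l => P l k * R k (Fin.castLE hmn l)
  have hexpand : ∑ l, b l * Y l (Fin.castLE hmn l) = ∑ k, ∑ l, a k * b l * M k l := by
    have hYe : ∀ l j, Y l j = ∑ k, P l k * a k * R k j := fun l j => by
      rw [hY, Matrix.mul_apply]
      simp only [mul_diagonal]
    simp only [hYe, Finset.mul_sum]
    rw [Finset.sum_comm]
    exact Finset.sum_congr rfl fun k _ => Finset.sum_congr rfl fun l _ => by ring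
  have hPiso := isPartialIsometry_of_transpose_mul_self hP
  have hrow : ∀ k, ∑ l, |M k l| ≤ 1 := fun k => by
    simp only [M, abs_mul]
    refine sum_abs_mul_abs_le_one (hPiso.sum_sq_col_le_one k) ?_
    calc ∑ l, R k (Fin.castLE hmn l) ^ 2
        = ∑ j ∈ Finset.univ.map (Fin.castLEEmb hmn), R k j ^ 2 :=
          (Finset.sum_map Finset.univ (Fin.castLEEmb hmn) fun j => R k j ^ 2).symm
      _ ≤ ∑ j, R k j ^ 2 := Finset.sum_le_univ_sum_of_nonneg fun _ => sq_nonneg _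
      _ ≤ 1 := hR.sum_sq_row_le_one k
  have hcol : ∀ l, ∑ k, |M k l| ≤ 1 := fun l => by
    simp only [M, abs_mul]
    exact sum_abs_mul_abs_le_one (hPiso.sum_sq_row_le_one l) (hR.sum_sq_col_le_one _)
  calc ∑ l, b l * Y l (Fin.castLE hmn l) = ∑ k, ∑ l, a k * b l * M k l := hexpand
    _ ≤ ∑ k, ∑ l, a k * b l * |M k l| :=
      Finset.sum_le_sum fun k _ => Finset.sum_le_sum fun l _ =>
        mul_le_mul_of_nonneg_left (le_abs_self _)
          (mul_nonneg (singularValues_nonneg Y k) (hb0 l))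
    _ ≤ ∑ k, a k * b k :=
      sum_mul_mul_le_of_doublySubstochastic (singularValues_antitone Y)
        (singularValues_nonneg Y) hb hb0 (fun _ _ => abs_nonneg _) hrow hcol

theorem trace_mul_transpose_svd_le (hmn : m ≤ n) (X : Matrix (Fin m) (Fin n) ℝ)
    {U : Matrix (Fin m) (Fin m) ℝ} {V : Matrix (Fin n) (Fin n) ℝ}
    (hU : Uᵀ * U = 1) (hV : Vᵀ * V = 1) {b : Fin m → ℝ} (hb : Antitone b) (hb0 : ∀ i, 0 ≤ b i) :
    trace (X * (U * (rectDiag b : Matrix (Fin m) (Fin n) ℝ) * Vᵀ)ᵀ) ≤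
      ∑ i, singularValues X i * b i := by
  have hUt : Uᵀᵀ * Uᵀ = 1 := by rw [transpose_transpose, mul_eq_one_comm.mp hU]
  have hcycle : trace (X * (U * (rectDiag b : Matrix (Fin m) (Fin n) ℝ) * Vᵀ)ᵀ) =
      trace (Uᵀ * X * V * (rectDiag b : Matrix (Fin m) (Fin n) ℝ)ᵀ) := by
    rw [transpose_mul, transpose_mul, transpose_transpose, ← Matrix.mul_assoc, ← Matrix.mul_assoc,
      trace_mul_comm, ← Matrix.mul_assoc, ← Matrix.mul_assoc]
  rw [hcycle, trace_mul_transpose_rectDiag hmn, ← singularValues_mul_mul_of_orthogonal X hUt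
    (mul_eq_one_comm.mp hV)]
  exact sum_mul_apply_castLE_le_sum_singularValues_mul hmn _ hb hb0

theorem sum_sq_sub_singularValues_le_frobSq_sub (hmn : m ≤ n) (X B : Matrix (Fin m) (Fin n) ℝ)
    {U : Matrix (Fin m) (Fin m) ℝ} {V : Matrix (Fin n) (Fin n) ℝ}
    (hU : Uᵀ * U = 1) (hV : Vᵀ * V = 1)
    (hSVD : B = U * (rectDiag (singularValues B) : Matrix (Fin m) (Fin n) ℝ) * Vᵀ) :
    ∑ i, (singularValues X i - singularValues B i) ^ 2 ≤ frobSq (X - B) := by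
  have hvN := trace_mul_transpose_svd_le hmn X hU hV (singularValues_antitone B)
    (singularValues_nonneg B)
  rw [← hSVD] at hvN
  have hexpand : ∑ i, (singularValues X i - singularValues B i) ^ 2 = ∑ i, singularValues X i ^ 2
      - 2 * ∑ i, singularValues X i * singularValues B i + ∑ i, singularValues B i ^ 2 := by
    simp only [sub_sq, Finset.sum_add_distrib, Finset.sum_sub_distrib, Finset.mul_sum]
    ring_nf
  rw [hexpand, frobSq_sub, frobSq_eq_sum_sq_singularValues X, frobSq_eq_sum_sq_singularValues B]
  linarith

end VonNeumann

theorem gsvt_optimal_general {m n : ℕ} (hmn : m ≤ n)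
    (g : ℝ → ℝ)
    (B : Matrix (Fin m) (Fin n) ℝ)
    (U : Matrix (Fin m) (Fin m) ℝ) (V : Matrix (Fin n) (Fin n) ℝ)
    (hU : Uᵀ * U = 1) (hV : Vᵀ * V = 1)
    (hSVD : B = U * rectDiag (singularValues B) * Vᵀ)
    (ϱ : Fin m → ℝ) (hϱ_anti : Antitone ϱ) (hϱ_nonneg : ∀ i, 0 ≤ ϱ i)
    (hϱ_prox : ∀ i, IsMinOn
      (fun x => g x + (1/2) * (x - singularValues B i)^2) (Ici 0) (ϱ i)) :
    IsMinOn (fun X : Matrix (Fin m) (Fin n) ℝ =>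
        (∑ i, g (singularValues X i)) + (1/2) * frobSq (X - B))
      Set.univ (U * rectDiag ϱ * Vᵀ) := by
  have hσ : singularValues (U * rectDiag ϱ * Vᵀ) = ϱ :=
    (singularValues_mul_mul_of_orthogonal _ hU (by rwa [transpose_transpose])).trans
      (singularValues_rectDiag hmn hϱ_anti hϱ_nonneg)
  have hdist : frobSq (U * rectDiag ϱ * Vᵀ - B) = ∑ i, (ϱ i - singularValues B i) ^ 2 := by
    conv_lhs => rw [hSVD]
    exact frobSq_svd_sub_svd hmn hU hV _ _
  refine isMinOn_univ_iff.2 fun X => ?_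
  have hprox : ∀ i, g (ϱ i) + 1 / 2 * (ϱ i - singularValues B i) ^ 2 ≤
      g (singularValues X i) + 1 / 2 * (singularValues X i - singularValues B i) ^ 2 :=
    fun i => hϱ_prox i (singularValues_nonneg X i)
  replace hprox := Finset.sum_le_sum fun i (_ : i ∈ Finset.univ) => hprox i
  simp only [Finset.sum_add_distrib, ← Finset.mul_sum] at hprox
  have hmirsky := sum_sq_sub_singularValues_le_frobSq_sub hmn X B hU hV hSVD
  rw [hσ, hdist]
  linarith

/-- Generalized Singular Value Thresholding: performing a nonincreasing selection
of the proximal operator of `g` on the singular values of `B` yields a global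
minimizer of `X ↦ ∑ᵢ g(σᵢ(X)) + ½‖X - B‖_F²`. -/
theorem gsvt_optimal {m n : ℕ} (hmn : m ≤ n)
    (g : ℝ → ℝ) (hg_nonneg : ∀ x ∈ Ici (0:ℝ), 0 ≤ g x) (hg0 : g 0 = 0)
    (B : Matrix (Fin m) (Fin n) ℝ)
    (U : Matrix (Fin m) (Fin m) ℝ) (V : Matrix (Fin n) (Fin n) ℝ)
    (hU : Uᵀ * U = 1) (hV : Vᵀ * V = 1)
    (hSVD : B = U * rectDiag (singularValues B) * Vᵀ)
    (ϱ : Fin m → ℝ) (hϱ_anti : Antitone ϱ) (hϱ_nonneg : ∀ i, 0 ≤ ϱ i)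
    (hϱ_prox : ∀ i, IsMinOn
      (fun x => g x + (1/2) * (x - singularValues B i)^2) (Ici 0) (ϱ i)) :
    IsMinOn (fun X : Matrix (Fin m) (Fin n) ℝ =>
        (∑ i, g (singularValues X i)) + (1/2) * frobSq (X - B))
      Set.univ (U * rectDiag ϱ * Vᵀ) :=
  gsvt_optimal_general hmn g B U V hU hV hSVD ϱ hϱ_anti hϱ_nonneg hϱ_prox
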